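/- arXiv:1011.5083 — 2 statements merged into one kernel-verified Lean document; each statement's English description precedes it below -/
import Mathlib

section
/- Let m ≤ n be positive integers and ν a real number with ν > m−1. Let M be an invertible m×m real matrix, N an invertible n×n real matrix, μ₀ a fixed m×n real matrix, and set 𝕭 = M·Mᵀ and 𝕯 = (N·Nᵀ)⁻¹. Then the pushforward of the standard matricvariate Pearson type II measure P(m,n,ν) under the map R ↦ (Mᵀ)⁻¹·R·N⁻¹ + μ₀ equals the measure on m×n real matrices with density Q ↦ [Γ_m((n+ν)/2)/(π^{mn/2}·Γ_m(ν/2))]·det(𝕭)^{(ν+n−m+1)/2−1}·det(𝕯)^{−m/2}·det(𝕭⁻¹ − (Q−μ₀)·𝕯⁻¹·(Q−μ₀)ᵀ)^{(ν−m+1)/2−1} on the set {Q : 𝕭⁻¹ − (Q−μ₀)·𝕯⁻¹·(Q−μ₀)ᵀ is positive definite} (and zero elsewhere), with respect to Lebesgue measure. -/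
open MeasureTheory Matrix

/-- View a family indexed by pairs as a matrix. -/
def toMat {m n : ℕ} (X : Fin m × Fin n → ℝ) : Matrix (Fin m) (Fin n) ℝ :=
  Matrix.of fun i j => X (i, j)

/-- The real multivariate gamma function. -/
noncomputable def mvGamma (m : ℕ) (a : ℝ) : ℝ :=
  Real.pi ^ ((m : ℝ) * ((m : ℝ) - 1) / 4) *
    ∏ i ∈ Finset.range m, Real.Gamma (a - (i : ℝ) / 2)

/-- The standard matricvariate Pearson type II measure on `m × n` real matrices. -/
noncomputable def pearsonII (m n : ℕ) (ν : ℝ) : Measure (Fin m × Fin n → ℝ) :=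
  volume.withDensity fun R =>
    {R : Fin m × Fin n → ℝ | ((1 : Matrix (Fin m) (Fin m) ℝ) - toMat R * (toMat R)ᵀ).PosDef}.indicator
      (fun R => ENNReal.ofReal
        (mvGamma m (((n : ℝ) + ν) / 2) / (Real.pi ^ ((m : ℝ) * n / 2) * mvGamma m (ν / 2)) *
          ((1 : Matrix (Fin m) (Fin m) ℝ) - toMat R * (toMat R)ᵀ).det ^ ((ν - m + 1) / 2 - 1 : ℝ))) R

/-!
In coordinates, `R ↦ A * R * B + C` is the Kronecker matrix `A ⊗ₖ Bᵀ` followed by a translation,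
so it maps Lebesgue measure to `|det A|⁻ⁿ |det B|⁻ᵐ` times itself, and the pushforward density is
the pulled-back density times `|det M|ⁿ |det N|ᵐ`. For `R = Mᵀ (Q - μ₀) N` one has
`1 - R Rᵀ = Mᵀ (𝕭⁻¹ - (Q - μ₀) 𝕯⁻¹ (Q - μ₀)ᵀ) M`, a congruence: it preserves positive
definiteness and multiplies the determinant by `det M ^ 2`, and the Jacobian factor is absorbed
into the powers of `det 𝕭 = det M ^ 2` and `det 𝕯 = det N ^ (-2)`.
-/

open scoped Kronecker ENNReal

theorem MeasurableEquiv.map_withDensity_of_map_eq_smul {α β : Type*} [MeasurableSpace α]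
    [MeasurableSpace β] (e : α ≃ᵐ β) {μ : Measure α} {ν : Measure β} {c : ℝ≥0∞} (hc : c ≠ ∞)
    (he : μ.map e = c • ν) (f : α → ℝ≥0∞) :
    (μ.withDensity f).map e = ν.withDensity fun y => c * f (e.symm y) := by
  have hmap : (μ.withDensity f).map e = (μ.map e).withDensity fun y => f (e.symm y) := by
    ext s hs
    rw [e.map_apply, withDensity_apply _ hs, withDensity_apply _ (e.measurable hs),
      Measure.restrict_map e.measurable hs, lintegral_map_equiv]
    simp only [MeasurableEquiv.symm_apply_apply]
  rw [hmap, he, withDensity_smul_measure, ← withDensity_smul' _ _ hc]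
  rfl

section MatrixCoordinates

variable {m n : ℕ}

def fromMat (X : Matrix (Fin m) (Fin n) ℝ) : Fin m × Fin n → ℝ := fun p => X p.1 p.2

@[simp]
theorem toMat_fromMat (X : Matrix (Fin m) (Fin n) ℝ) : toMat (fromMat X) = X := rfl

@[simp]
theorem fromMat_toMat (X : Fin m × Fin n → ℝ) : fromMat (toMat X) = X := rfl

theorem fromMat_add (X Y : Matrix (Fin m) (Fin n) ℝ) :
    fromMat (X + Y) = fromMat X + fromMat Y := rfl

theorem fromMat_mul_toMat_mul (A : Matrix (Fin m) (Fin m) ℝ) (B : Matrix (Fin n) (Fin n) ℝ)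
    (X : Fin m × Fin n → ℝ) : fromMat (A * toMat X * B) = (A ⊗ₖ Bᵀ) *ᵥ X := by
  calc fromMat (A * toMat X * B) = vec (A * toMat X * B)ᵀ := rfl
    _ = vec (Bᵀ * (toMat X)ᵀ * Aᵀ) := by rw [transpose_mul, transpose_mul, Matrix.mul_assoc]
    _ = (A ⊗ₖ Bᵀ) *ᵥ X := (kronecker_mulVec_vec _ _ _).symm

end MatrixCoordinates

section MatrixAffineEquiv

variable {m n : ℕ} (A : Matrix (Fin m) (Fin m) ℝ) (B : Matrix (Fin n) (Fin n) ℝ)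
  (C : Matrix (Fin m) (Fin n) ℝ)

theorem measurable_fromMat_mul_toMat_mul_add :
    Measurable fun X : Fin m × Fin n → ℝ => fromMat (A * toMat X * B + C) := by
  simp_rw [fromMat_add, fromMat_mul_toMat_mul]
  fun_prop

variable {A B} (hA : IsUnit A.det) (hB : IsUnit B.det)

noncomputable def matrixAffineEquiv : (Fin m × Fin n → ℝ) ≃ᵐ (Fin m × Fin n → ℝ) where
  toFun X := fromMat (A * toMat X * B + C)
  invFun Y := fromMat (A⁻¹ * (toMat Y - C) * B⁻¹)
  left_inv X := by
    simp [Matrix.mul_assoc, nonsing_inv_mul_cancel_left _ _ hA, mul_nonsing_inv _ hB]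
  right_inv Y := by
    simp [← Matrix.mul_assoc, mul_nonsing_inv_cancel_left _ _ hA,
      nonsing_inv_mul_cancel_right _ _ hB]
  measurable_toFun := measurable_fromMat_mul_toMat_mul_add A B C
  measurable_invFun := by
    simp_rw [sub_eq_add_neg, Matrix.mul_add, Matrix.add_mul]
    exact measurable_fromMat_mul_toMat_mul_add _ _ _

theorem matrixAffineEquiv_apply (X : Fin m × Fin n → ℝ) :
    matrixAffineEquiv C hA hB X = fromMat (A * toMat X * B + C) := rfl

theorem matrixAffineEquiv_symm_apply (Y : Fin m × Fin n → ℝ) :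
    (matrixAffineEquiv C hA hB).symm Y = fromMat (A⁻¹ * (toMat Y - C) * B⁻¹) := rfl

theorem map_volume_matrixAffineEquiv :
    volume.map (matrixAffineEquiv C hA hB) =
      ENNReal.ofReal (|A.det| ^ n * |B.det| ^ m)⁻¹ • volume := by
  have hK : (A ⊗ₖ Bᵀ).det = A.det ^ n * B.det ^ m := by
    rw [det_kronecker, det_transpose, Fintype.card_fin, Fintype.card_fin]
  have he : ⇑(matrixAffineEquiv C hA hB) = (· + fromMat C) ∘ toLin' (A ⊗ₖ Bᵀ) := by
    funext X
    rw [matrixAffineEquiv_apply, fromMat_add, fromMat_mul_toMat_mul, Function.comp_apply,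
      toLin'_apply]
  have hlin : Measurable (toLin' (A ⊗ₖ Bᵀ)) :=
    (toLin' (A ⊗ₖ Bᵀ)).continuous_of_finiteDimensional.measurable
  rw [he, ← Measure.map_map (measurable_add_const _) hlin,
    Real.map_matrix_volume_pi_eq_smul_volume_pi (hK ▸ (hA.pow n).mul (hB.pow m)).ne_zero,
    Measure.map_smul, map_add_right_eq_self, hK, abs_inv, abs_mul, abs_pow, abs_pow]

end MatrixAffineEquiv

theorem one_sub_mul_mul_transpose_eq {R ι κ : Type*} [CommRing R] [Fintype ι] [DecidableEq ι]
    [Fintype κ] [DecidableEq κ] {M : Matrix ι ι R} {N : Matrix κ κ R} (hM : IsUnit M.det)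
    (hN : IsUnit N.det) (Y : Matrix ι κ R) :
    1 - Mᵀ * Y * N * (Mᵀ * Y * N)ᵀ = Mᵀ * ((M * Mᵀ)⁻¹ - Y * ((N * Nᵀ)⁻¹)⁻¹ * Yᵀ) * M := by
  have hMt : IsUnit Mᵀ.det := by rwa [det_transpose]
  have hNN : IsUnit (N * Nᵀ).det := by rw [det_mul, det_transpose]; exact hN.mul hN
  rw [nonsing_inv_nonsing_inv _ hNN, Matrix.mul_inv_rev, Matrix.mul_sub, Matrix.sub_mul,
    ← Matrix.mul_assoc, mul_nonsing_inv _ hMt, Matrix.one_mul, nonsing_inv_mul _ hM]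
  simp only [transpose_mul, transpose_transpose, Matrix.mul_assoc]

theorem Matrix.posDef_transpose_mul_mul_iff {ι : Type*} [Fintype ι] [DecidableEq ι]
    {M X : Matrix ι ι ℝ} (hM : IsUnit M.det) : (Mᵀ * X * M).PosDef ↔ X.PosDef := by
  rw [← conjTranspose_eq_transpose_of_trivial, ← star_eq_conjTranspose]
  exact IsUnit.posDef_star_left_conjugate_iff ((isUnit_iff_isUnit_det M).mpr hM)

theorem abs_pow_mul_abs_pow_mul_rpow_eq {a b d : ℝ} (ha : a ≠ 0) (hb : b ≠ 0) (hd : 0 < d)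
    (m n : ℕ) (c p : ℝ) :
    |a| ^ n * |b| ^ m * (c * (a * d * a) ^ p) =
      c * (a * a) ^ (p + n / 2) * ((b * b)⁻¹) ^ (-(m : ℝ) / 2) * d ^ p := by
  have ha' : 0 ≤ |a| := abs_nonneg a
  have hb' : 0 ≤ |b| := abs_nonneg b
  have hsq : ∀ x : ℝ, x * x = |x| ^ 2 := fun x => by rw [sq_abs, sq]
  rw [show a * d * a = |a| ^ 2 * d by rw [← hsq]; ring, hsq a, hsq b,
    Real.mul_rpow (by positivity) hd.le, Real.inv_rpow (by positivity),
    ← Real.rpow_natCast_mul ha', ← Real.rpow_natCast_mul ha', ← Real.rpow_natCast_mul hb',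
    ← Real.rpow_neg (by positivity), mul_add, Real.rpow_add (abs_pos.mpr ha),
    ← Real.rpow_natCast |a| n, ← Real.rpow_natCast |b| m]
  push_cast
  ring_nf

theorem pearsonII_affine_transform_general (m n : ℕ) (ν : ℝ)
    (M : Matrix (Fin m) (Fin m) ℝ) (hM : IsUnit M.det)
    (N : Matrix (Fin n) (Fin n) ℝ) (hN : IsUnit N.det)
    (μ₀ : Matrix (Fin m) (Fin n) ℝ) :
    Measure.map (fun R : Fin m × Fin n → ℝ => fun p : Fin m × Fin n =>
        (Mᵀ⁻¹ * toMat R * N⁻¹ + μ₀) p.1 p.2) (pearsonII m n ν) =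
      volume.withDensity fun Q =>
        {Q : Fin m × Fin n → ℝ |
            ((M * Mᵀ)⁻¹ -
              (toMat Q - μ₀) * ((N * Nᵀ)⁻¹)⁻¹ * (toMat Q - μ₀)ᵀ).PosDef}.indicator
          (fun Q => ENNReal.ofReal
            (mvGamma m (((n : ℝ) + ν) / 2) / (Real.pi ^ ((m : ℝ) * n / 2) * mvGamma m (ν / 2)) *
              (M * Mᵀ).det ^ ((ν + n - m + 1) / 2 - 1 : ℝ) *
              ((N * Nᵀ)⁻¹).det ^ (-(m : ℝ) / 2) *
              ((M * Mᵀ)⁻¹ -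
                (toMat Q - μ₀) * ((N * Nᵀ)⁻¹)⁻¹ * (toMat Q - μ₀)ᵀ).det ^ ((ν - m + 1) / 2 - 1 : ℝ))) Q := by
  have hMt : IsUnit Mᵀ.det := by rwa [det_transpose]
  let e := matrixAffineEquiv μ₀ (isUnit_nonsing_inv_det _ hMt) (isUnit_nonsing_inv_det _ hN)
  rw [show (fun R p => (Mᵀ⁻¹ * toMat R * N⁻¹ + μ₀) p.1 p.2) = ⇑e from rfl, pearsonII,
    e.map_withDensity_of_map_eq_smul ENNReal.ofReal_ne_top (map_volume_matrixAffineEquiv μ₀ _ _)]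
  congr 1
  funext Q
  rw [matrixAffineEquiv_symm_apply, nonsing_inv_nonsing_inv _ hMt,
    nonsing_inv_nonsing_inv _ hN]
  classical
  simp only [Set.indicator_apply, Set.mem_ofPred_eq, toMat_fromMat,
    one_sub_mul_mul_transpose_eq hM hN, posDef_transpose_mul_mul_iff hM]
  split_ifs with hΔ
  · have hjac : (|Mᵀ⁻¹.det| ^ n * |N⁻¹.det| ^ m)⁻¹ = |M.det| ^ n * |N.det| ^ m := by
      simp only [det_nonsing_inv, det_transpose, Ring.inverse_eq_inv, abs_inv, inv_pow, mul_inv,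
        inv_inv]
    rw [← ENNReal.ofReal_mul (by positivity), hjac]
    congr 1
    rw [det_mul, det_mul, det_mul, det_transpose, det_nonsing_inv, det_mul, det_transpose,
      Ring.inverse_eq_inv, show (ν + n - m + 1) / 2 - 1 = (ν - m + 1) / 2 - 1 + n / 2 by ring]
    exact abs_pow_mul_abs_pow_mul_rpow_eq hM.ne_zero hN.ne_zero hΔ.det_pos m n _ _
  · rw [mul_zero]

theorem pearsonII_affine_transform (m n : ℕ) (ν : ℝ) (hm : 1 ≤ m) (hmn : m ≤ n)
    (hν : (m : ℝ) - 1 < ν)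
    (M : Matrix (Fin m) (Fin m) ℝ) (hM : IsUnit M.det)
    (N : Matrix (Fin n) (Fin n) ℝ) (hN : IsUnit N.det)
    (μ₀ : Matrix (Fin m) (Fin n) ℝ) :
    Measure.map (fun R : Fin m × Fin n → ℝ => fun p : Fin m × Fin n =>
        (Mᵀ⁻¹ * toMat R * N⁻¹ + μ₀) p.1 p.2) (pearsonII m n ν) =
      volume.withDensity fun Q =>
        {Q : Fin m × Fin n → ℝ |
            ((M * Mᵀ)⁻¹ -
              (toMat Q - μ₀) * ((N * Nᵀ)⁻¹)⁻¹ * (toMat Q - μ₀)ᵀ).PosDef}.indicator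
          (fun Q => ENNReal.ofReal
            (mvGamma m (((n : ℝ) + ν) / 2) / (Real.pi ^ ((m : ℝ) * n / 2) * mvGamma m (ν / 2)) *
              (M * Mᵀ).det ^ ((ν + n - m + 1) / 2 - 1 : ℝ) *
              ((N * Nᵀ)⁻¹).det ^ (-(m : ℝ) / 2) *
              ((M * Mᵀ)⁻¹ -
                (toMat Q - μ₀) * ((N * Nᵀ)⁻¹)⁻¹ * (toMat Q - μ₀)ᵀ).det ^ ((ν - m + 1) / 2 - 1 : ℝ))) Q :=
  pearsonII_affine_transform_general m n ν M hM N hN μ₀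
end

section
/- Let m ≤ n be positive integers, ν a real number with ν > m−1, and let R be an m×n real matrix such that 1 − R·Rᵀ is positive definite. Then the two expressions for the matricvariate Pearson type II density agree: [Γ_m((n+ν)/2)/Γ_m(ν/2)]·det(1_m − R·Rᵀ)^{(ν−m+1)/2−1} = [Γ_n((n+ν)/2)/Γ_n((n+ν−m)/2)]·det(1_n − Rᵀ·R)^{(ν−m+1)/2−1}. -/
open Matrix

lemma aux_prod (g : ℕ → ℝ) (m n : ℕ) :
    (∏ i ∈ Finset.range m, g (n + i)) * ∏ j ∈ Finset.range n, g j
      = (∏ j ∈ Finset.range n, g (m + j)) * ∏ i ∈ Finset.range m, g i := by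
  rw [mul_comm, ← Finset.prod_range_add, mul_comm, ← Finset.prod_range_add, Nat.add_comm]

lemma reflect_prod (a : ℝ) (k : ℕ) (c : ℝ) (hc : c = 2 * a - (k:ℝ) + 1) :
    (∏ i ∈ Finset.range k, Real.Gamma (a - (i : ℝ) / 2))
      = ∏ i ∈ Finset.range k, Real.Gamma ((c + i) / 2) := by
  rw [← Finset.prod_range_reflect]
  refine Finset.prod_congr rfl fun i hi => ?_
  have hi' := Finset.mem_range.mp hi
  congr 1
  rw [Nat.sub_sub, Nat.cast_sub (by omega : 1 + i ≤ k), Nat.cast_add, Nat.cast_one, hc]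
  ring

lemma mvGamma_ratio (m n : ℕ) (ν : ℝ) :
    mvGamma m (((n : ℝ) + ν) / 2) * mvGamma n (((n : ℝ) + ν - m) / 2)
      = mvGamma n (((n : ℝ) + ν) / 2) * mvGamma m (ν / 2) := by
  unfold mvGamma
  set g : ℕ → ℝ := fun k => Real.Gamma ((ν - ((m:ℝ) - 1) + k) / 2) with hg
  have P1 : (∏ i ∈ Finset.range m, Real.Gamma (((n:ℝ) + ν) / 2 - (i : ℝ) / 2))
      = ∏ i ∈ Finset.range m, g (n + i) := by
    rw [reflect_prod _ m (ν - ((m:ℝ) - 1) + n) (by ring)]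
    refine Finset.prod_congr rfl fun i _ => ?_
    simp only [hg]; push_cast; ring_nf
  have P2 : (∏ j ∈ Finset.range n, Real.Gamma (((n:ℝ) + ν - m) / 2 - (j : ℝ) / 2))
      = ∏ j ∈ Finset.range n, g j := by
    rw [reflect_prod _ n (ν - ((m:ℝ) - 1)) (by ring)]
  have P3 : (∏ j ∈ Finset.range n, Real.Gamma (((n:ℝ) + ν) / 2 - (j : ℝ) / 2))
      = ∏ j ∈ Finset.range n, g (m + j) := by
    rw [reflect_prod _ n (ν - ((m:ℝ) - 1) + m) (by ring)]
    refine Finset.prod_congr rfl fun i _ => ?_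
    simp only [hg]; push_cast; ring_nf
  have P4 : (∏ i ∈ Finset.range m, Real.Gamma (ν / 2 - (i : ℝ) / 2))
      = ∏ i ∈ Finset.range m, g i := by
    rw [reflect_prod _ m (ν - ((m:ℝ) - 1)) (by ring)]
  rw [P1, P2, P3, P4]
  linear_combination (Real.pi ^ ((m : ℝ) * ((m:ℝ) - 1) / 4)
    * Real.pi ^ ((n : ℝ) * ((n:ℝ) - 1) / 4)) * aux_prod g m n

lemma mvGamma_pos (k : ℕ) (a : ℝ) (h : (k : ℝ) - 1 < 2 * a) : 0 < mvGamma k a := by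
  unfold mvGamma
  apply mul_pos (Real.rpow_pos_of_pos Real.pi_pos _)
  apply Finset.prod_pos
  intro i hi
  apply Real.Gamma_pos_of_pos
  have hi' : (i : ℝ) + 1 ≤ k := by exact_mod_cast Finset.mem_range.mp hi
  linarith

theorem pearsonII_density_two_forms (m n : ℕ) (ν : ℝ) (hm : 1 ≤ m) (hmn : m ≤ n)
    (hν : (m : ℝ) - 1 < ν) (R : Matrix (Fin m) (Fin n) ℝ)
    (hR : ((1 : Matrix (Fin m) (Fin m) ℝ) - R * Rᵀ).PosDef) :
    mvGamma m (((n : ℝ) + ν) / 2) / mvGamma m (ν / 2) *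
        ((1 : Matrix (Fin m) (Fin m) ℝ) - R * Rᵀ).det ^ ((ν - m + 1) / 2 - 1 : ℝ) =
      mvGamma n (((n : ℝ) + ν) / 2) / mvGamma n (((n : ℝ) + ν - m) / 2) *
        ((1 : Matrix (Fin n) (Fin n) ℝ) - Rᵀ * R).det ^ ((ν - m + 1) / 2 - 1 : ℝ) := by
  rw [← Matrix.det_one_sub_mul_comm R Rᵀ]
  congr 1
  have hB : 0 < mvGamma m (ν / 2) := mvGamma_pos m _ (by linarith)
  have hD : 0 < mvGamma n (((n : ℝ) + ν - m) / 2) := mvGamma_pos n _ (by linarith)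
  rw [div_eq_div_iff hB.ne' hD.ne']
  linear_combination mvGamma_ratio m n ν
end
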